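/- With the notation of the path decomposition: for any indices i, j, the identity ((1−M)^{-1})_{1i}·P_i + Q_i = ((1−M)^{-1})_{1j}·P_j + Q_j holds in Q⟨⟨a_kl⟩⟩, where P_i = sum over j of P_ij (sum of all paths starting at i never returning to i) and Q_i is the sum of all paths starting at vertex 1 that never pass through i (so Q₁ = 0). -/

import Mathlib

/-! Setup: the ring `ℚ⟨⟨a_ij⟩⟩` of noncommutative power series in the `n²` letters
`a_ij` (`1 ≤ i,j ≤ n`) is realized via its graded embedding into `ℚ⟨a_ij⟩[[t]]`,
sending a letter to `t·a_ij`: a noncommutative series is determined by its homogeneous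
components, which are noncommutative polynomials, i.e. elements of the free algebra.
Words over the alphabet `{a_ij}` are lists of edges `(i,j)` of the complete digraph
on the vertex set `Fin n`, identified with paths. -/

/-- An edge of the complete digraph on `Fin n`, i.e. a letter `a_ij`. -/
abbrev Edge (n : ℕ) := Fin n × Fin n

/-- `isPath i j w = true` iff the word `w` is a path from `i` to `j`. -/
def isPath {n : ℕ} (i j : Fin n) : List (Edge n) → Bool
  | [] => decide (i = j)
  | e :: rest => decide (i = e.1) && isPath e.2 j rest

/-- `firstRet i v w = true` iff `w` is a nonempty path from `v` which reaches `i`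
exactly at its last step (and never before).  The code `C_i` (nonempty paths `i → i`
not passing through `i` internally) is `firstRet i i`. -/
def firstRet {n : ℕ} (i v : Fin n) : List (Edge n) → Bool
  | [] => false
  | e :: rest =>
      decide (v = e.1) && (if e.2 = i then rest.isEmpty else firstRet i e.2 rest)

/-- `avoidTo i v j w = true` iff `w` is a path from `v` to `j` never visiting `i`
after its starting point.  `P_ij` is `avoidTo i i j` (so `P_ii = {ε}`). -/
def avoidTo {n : ℕ} (i v j : Fin n) : List (Edge n) → Bool
  | [] => decide (v = j)
  | e :: rest => decide (v = e.1) && !decide (e.2 = i) && avoidTo i e.2 j rest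

/-- `avoidFrom i v w = true` iff `w` is a path from `v` never visiting `i` after its
starting point.  `P_i = ∑_j P_ij` is `avoidFrom i i`. -/
def avoidFrom {n : ℕ} (i v : Fin n) : List (Edge n) → Bool
  | [] => true
  | e :: rest => decide (v = e.1) && !decide (e.2 = i) && avoidFrom i e.2 rest

/-- The element of the free algebra corresponding to a word. -/
noncomputable def wordOf {n : ℕ} (w : List (Edge n)) : FreeAlgebra ℚ (Edge n) :=
  (w.map (FreeAlgebra.ι ℚ)).prod

/-- The characteristic series (an element of `ℚ⟨⟨a_ij⟩⟩`) of the language of words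
satisfying `p`: its homogeneous component of degree `m` is the sum of all words of
length `m` in the language. -/
noncomputable def ser {n : ℕ} (p : List (Edge n) → Bool) :
    PowerSeries (FreeAlgebra ℚ (Edge n)) :=
  PowerSeries.mk fun m =>
    ∑ w : List.Vector (Edge n) m, if p w.toList then wordOf w.toList else 0

/-- The generic `n × n` matrix `M = (a_ij)` over `ℚ⟨⟨a_ij⟩⟩`. -/
noncomputable def genM (n : ℕ) :
    Matrix (Fin n) (Fin n) (PowerSeries (FreeAlgebra ℚ (Edge n))) :=
  Matrix.of fun i j => PowerSeries.X * PowerSeries.C (FreeAlgebra.ι ℚ (i, j))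

/-! Both sides equal the series of all paths starting at `0`. The matrix `N` of path series
inverts `1 - M` on both sides, because splitting off the first (resp. last) edge of a path gives
`N = 1 + M N = 1 + N M`. A path from `0` either never visits `i`, or splits uniquely at its last
visit to `i` into a path `0 → i` followed by a path from `i` that never returns to `i`; and the
series of an unambiguous concatenation of two languages is the product of their series. -/

variable {n : ℕ}

def wordsOfLength (n m : ℕ) : Finset (List (Edge n)) :=
  (Finset.univ : Finset (List.Vector (Edge n) m)).map
    ⟨List.Vector.toList, List.Vector.toList_injective⟩

lemma mem_wordsOfLength {m : ℕ} {w : List (Edge n)} : w ∈ wordsOfLength n m ↔ w.length = m := by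
  simp only [wordsOfLength, Finset.mem_map, Finset.mem_univ, true_and,
    Function.Embedding.coeFn_mk]
  exact ⟨by rintro ⟨v, rfl⟩; exact v.2, fun h => ⟨⟨w, h⟩, rfl⟩⟩

lemma coeff_ser (p : List (Edge n) → Bool) (m : ℕ) :
    PowerSeries.coeff m (ser p) = ∑ w ∈ wordsOfLength n m, if p w then wordOf w else 0 := by
  simp [ser, wordsOfLength]

lemma wordOf_append (u v : List (Edge n)) : wordOf (u ++ v) = wordOf u * wordOf v := by
  simp [wordOf]

lemma ser_eq_X_pow_mul_C (u : List (Edge n)) :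
    ser (fun w => decide (w = u)) = PowerSeries.X ^ u.length * PowerSeries.C (wordOf u) := by
  ext m
  simp only [coeff_ser, decide_eq_true_eq]
  rw [Finset.sum_ite_eq' _ u, PowerSeries.coeff_X_pow_mul', PowerSeries.coeff_C]
  simp only [mem_wordsOfLength]
  by_cases h : u.length = m
  · simp [h]
  · rw [if_neg h]
    split_ifs <;> first | rfl | omega

lemma ser_add {p q r : List (Edge n) → Bool} (hr : ∀ w, r w = true ↔ p w = true ∨ q w = true)
    (hpq : ∀ w, p w = true → q w = false) : ser p + ser q = ser r := by
  ext m
  simp only [map_add, coeff_ser, ← Finset.sum_add_distrib]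
  refine Finset.sum_congr rfl fun w _ => ?_
  have hrw := hr w
  have hpqw := hpq w
  by_cases hp : p w <;> by_cases hq : q w <;> simp_all

lemma ser_sum {ι : Type*} [Fintype ι] {p : ι → List (Edge n) → Bool} {r : List (Edge n) → Bool}
    (hr : ∀ w, r w = true ↔ ∃ t, p t w = true)
    (hp : ∀ t t' w, p t w = true → p t' w = true → t = t') :
    ∑ t, ser (p t) = ser r := by
  ext m
  simp only [map_sum, coeff_ser]
  rw [Finset.sum_comm]
  refine Finset.sum_congr rfl fun w _ => ?_
  by_cases hw : r w = true
  · obtain ⟨t, ht⟩ := (hr w).mp hw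
    rw [if_pos hw, Finset.sum_eq_single t (fun t' _ ht' => if_neg fun h => ht' (hp _ _ _ h ht))
      (by simp), if_pos ht]
  · rw [if_neg hw]
    exact Finset.sum_eq_zero fun t _ => if_neg fun h => hw ((hr w).mpr ⟨t, h⟩)

lemma ser_mul {p q r : List (Edge n) → Bool}
    (hr : ∀ w, r w = true ↔ ∃ u v, w = u ++ v ∧ p u = true ∧ q v = true)
    (hpq : ∀ u v u' v', u ++ v = u' ++ v' → p u = true → q v = true → p u' = true →
      q v' = true → u = u') :
    ser p * ser q = ser r := by
  ext m
  have hprod : ∀ kl : ℕ × ℕ, PowerSeries.coeff kl.1 (ser p) * PowerSeries.coeff kl.2 (ser q) =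
      ∑ uv ∈ wordsOfLength n kl.1 ×ˢ wordsOfLength n kl.2,
        if p uv.1 = true ∧ q uv.2 = true then wordOf (uv.1 ++ uv.2) else 0 := by
    intro kl
    rw [coeff_ser, coeff_ser, Finset.sum_mul_sum, ← Finset.sum_product']
    refine Finset.sum_congr rfl fun uv _ => ?_
    by_cases hp : p uv.1 <;> by_cases hq : q uv.2 <;> simp [hp, hq, wordOf_append]
  rw [PowerSeries.coeff_mul, Finset.sum_congr rfl fun kl _ => hprod kl, Finset.sum_sigma',
    coeff_ser]
  refine Finset.sum_bij_ne_zero (fun x _ _ => x.2.1 ++ x.2.2) ?_ ?_ ?_ ?_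
  · rintro ⟨⟨k, l⟩, u, v⟩ hx hne
    simp only [Finset.mem_sigma, Finset.mem_product, Finset.HasAntidiagonal.mem_antidiagonal,
      mem_wordsOfLength] at hx
    simp [mem_wordsOfLength, ← hx.1, hx.2.1, hx.2.2]
  · rintro ⟨⟨k, l⟩, u, v⟩ hx hne ⟨⟨k', l'⟩, u', v'⟩ hx' hne' h
    simp only [Finset.mem_sigma, Finset.mem_product, mem_wordsOfLength] at hx hx'
    obtain ⟨hpu, hqv⟩ := (ite_ne_right_iff.mp hne).1
    obtain ⟨hpu', hqv'⟩ := (ite_ne_right_iff.mp hne').1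
    obtain rfl := hpq u v u' v' h hpu hqv hpu' hqv'
    obtain rfl := List.append_cancel_left h
    obtain ⟨⟨rfl, rfl⟩, ⟨rfl, rfl⟩⟩ := And.intro hx.2 hx'.2
    rfl
  · intro w hw hne
    obtain ⟨hrw, hword⟩ := ite_ne_right_iff.mp hne
    obtain ⟨u, v, rfl, hpu, hqv⟩ := (hr w).mp hrw
    refine ⟨⟨(u.length, v.length), u, v⟩, ?_, by rwa [if_pos ⟨hpu, hqv⟩], rfl⟩
    simpa [mem_wordsOfLength] using hw
  · rintro ⟨⟨k, l⟩, u, v⟩ hx hne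
    obtain ⟨hpu, hqv⟩ := (ite_ne_right_iff.mp hne).1
    rw [if_pos ⟨hpu, hqv⟩, if_pos ((hr _).mpr ⟨u, v, rfl, hpu, hqv⟩)]

lemma sum_ser_mul_ser {ι : Type*} [Fintype ι] {p q : ι → List (Edge n) → Bool}
    {r : List (Edge n) → Bool}
    (hr : ∀ w, r w = true ↔ ∃ t u v, w = u ++ v ∧ p t u = true ∧ q t v = true)
    (hpq : ∀ t t' u v u' v', u ++ v = u' ++ v' → p t u = true → q t v = true →
      p t' u' = true → q t' v' = true → t = t' ∧ u = u') :
    ∑ t, ser (p t) * ser (q t) = ser r := by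
  classical
  rw [Finset.sum_congr rfl fun t _ => ser_mul (r := fun w =>
    decide (∃ u v, w = u ++ v ∧ p t u = true ∧ q t v = true)) (by simp)
    fun u v u' v' h hu hv hu' hv' => (hpq t t u v u' v' h hu hv hu' hv').2]
  refine ser_sum (by simpa using hr) ?_
  simp only [decide_eq_true_eq]
  rintro t t' w ⟨u, v, rfl, hu, hv⟩ ⟨u', v', h, hu', hv'⟩
  exact (hpq t t' u v u' v' h hu hv hu' hv').1

def isPathFrom (a : Fin n) : List (Edge n) → Bool
  | [] => true
  | e :: rest => decide (a = e.1) && isPathFrom e.2 rest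

lemma isPath_append_iff {a c : Fin n} {u v : List (Edge n)} :
    isPath a c (u ++ v) = true ↔ ∃ b, isPath a b u = true ∧ isPath b c v = true := by
  induction u generalizing a with
  | nil => simp [isPath]
  | cons e u ih => simp [isPath, ih, and_assoc]

lemma isPath_singleton {a b : Fin n} {e : Edge n} : isPath a b [e] = true ↔ e = (a, b) := by
  obtain ⟨x, y⟩ := e
  simp only [isPath, Bool.and_eq_true, decide_eq_true_eq, Prod.mk.injEq]
  exact ⟨fun ⟨h1, h2⟩ => ⟨h1.symm, h2⟩, fun ⟨h1, h2⟩ => ⟨h1.symm, h2⟩⟩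

lemma eq_of_isPath_of_isPath {a b b' : Fin n} {w : List (Edge n)} (h : isPath a b w = true)
    (h' : isPath a b' w = true) : b = b' := by
  induction w generalizing a with
  | nil => simp only [isPath, decide_eq_true_eq] at h h'; exact h ▸ h'
  | cons e w ih => simp only [isPath, Bool.and_eq_true] at h h'; exact ih h.2 h'.2

lemma isPathFrom_append {a b : Fin n} {u v : List (Edge n)} (hu : isPath a b u = true)
    (hv : isPathFrom b v = true) : isPathFrom a (u ++ v) = true := by
  induction u generalizing a with
  | nil => simp only [isPath, decide_eq_true_eq] at hu; exact hu ▸ hv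
  | cons e u ih =>
    simp only [isPath, Bool.and_eq_true] at hu
    simp [isPathFrom, hu.1, ih hu.2]

lemma isPathFrom_of_avoidFrom {i a : Fin n} {w : List (Edge n)} (h : avoidFrom i a w = true) :
    isPathFrom a w = true := by
  induction w generalizing a with
  | nil => rfl
  | cons e w ih =>
    simp only [avoidFrom, Bool.and_eq_true] at h
    simp [isPathFrom, h.1.1, ih h.2]

lemma avoidFrom_append_eq_false {i b : Fin n} {x : List (Edge n)} (hx : isPath b i x = true)
    (hne : x ≠ []) (y : List (Edge n)) : avoidFrom i b (x ++ y) = false := by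
  induction x generalizing b with
  | nil => exact absurd rfl hne
  | cons e x ih =>
    simp only [isPath, Bool.and_eq_true] at hx
    rcases x with _ | ⟨e', x⟩
    · simp_all [isPath, avoidFrom]
    · rw [List.cons_append, avoidFrom, ih hx.2 (List.cons_ne_nil _ _), Bool.and_false]

lemma avoidFrom_or_exists_split {i a : Fin n} {w : List (Edge n)} (hw : isPathFrom a w = true) :
    (a ≠ i ∧ avoidFrom i a w = true) ∨
      ∃ u v, w = u ++ v ∧ isPath a i u = true ∧ avoidFrom i i v = true := by
  induction w generalizing a with
  | nil =>
    by_cases hai : a = i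
    · exact Or.inr ⟨[], [], rfl, by simp [isPath, hai], rfl⟩
    · exact Or.inl ⟨hai, rfl⟩
  | cons e w ih =>
    simp only [isPathFrom, Bool.and_eq_true, decide_eq_true_eq] at hw
    obtain ⟨rfl, hw⟩ := hw
    rcases ih hw with ⟨hei, hav⟩ | ⟨u, v, rfl, hu, hv⟩
    · by_cases hai : e.1 = i
      · exact Or.inr ⟨[], e :: w, rfl, by simp [isPath, hai], by simp [avoidFrom, hai, hei, hav]⟩
      · exact Or.inl ⟨hai, by simp [avoidFrom, hei, hav]⟩
    · exact Or.inr ⟨e :: u, v, rfl, by simp [isPath, hu], hv⟩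

lemma isPath_append_avoidFrom_unique {a i : Fin n} {u v u' v' : List (Edge n)}
    (h : u ++ v = u' ++ v') (hu : isPath a i u = true) (hv : avoidFrom i i v = true)
    (hu' : isPath a i u' = true) (hv' : avoidFrom i i v' = true) : u = u' := by
  suffices key : ∀ {u v u' v' : List (Edge n)} (x : List (Edge n)), u' = u ++ x → v = x ++ v' →
      isPath a i u = true → avoidFrom i i v = true → isPath a i u' = true → u = u' by
    rcases List.append_eq_append_iff.mp h with ⟨x, hu'x, hvx⟩ | ⟨x, hux, hv'x⟩
    · exact key x hu'x hvx hu hv hu'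
    · exact (key x hux hv'x hu' hv' hu).symm
  intro u v u' v' x hu'x hvx hu hv hu'
  subst hu'x hvx
  obtain ⟨b, hub, hx⟩ := isPath_append_iff.mp hu'
  obtain rfl := eq_of_isPath_of_isPath hu hub
  by_cases hxe : x = []
  · simp [hxe]
  · simp [avoidFrom_append_eq_false hx hxe] at hv

lemma ser_false : ser (fun _ : List (Edge n) => false) = 0 := by
  ext m
  simp [coeff_ser]

lemma genM_apply_eq_ser (k l : Fin n) : genM n k l = ser (fun w => decide (w = [(k, l)])) := by
  simp [ser_eq_X_pow_mul_C, genM, wordOf]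

lemma one_apply_eq_ser (k l : Fin n) :
    (1 : Matrix (Fin n) (Fin n) (PowerSeries (FreeAlgebra ℚ (Edge n)))) k l =
      ser (fun w => decide (w = [] ∧ k = l)) := by
  by_cases hkl : k = l
  · subst hkl
    simp [ser_eq_X_pow_mul_C, wordOf]
  · simp [hkl, ser_false]

lemma ser_isPath_eq_add (k l : Fin n) :
    ser (isPath k l) =
      ser (fun w => decide (w = [] ∧ k = l)) + ser (fun w => decide (w ≠ []) && isPath k l w) :=
  (ser_add (fun w => by rcases w with _ | ⟨e, w⟩ <;> simp [isPath]) (by simp_all)).symm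

noncomputable def pathMatrix (n : ℕ) :
    Matrix (Fin n) (Fin n) (PowerSeries (FreeAlgebra ℚ (Edge n))) :=
  Matrix.of fun k l => ser (isPath k l)

lemma pathMatrix_eq_one_add_genM_mul : pathMatrix n = 1 + genM n * pathMatrix n := by
  ext k l
  simp only [Matrix.add_apply, Matrix.mul_apply, pathMatrix, Matrix.of_apply, genM_apply_eq_ser,
    one_apply_eq_ser]
  rw [ser_isPath_eq_add, sum_ser_mul_ser]
  · rintro (_ | ⟨⟨a, b⟩, w⟩)
    · simp
    · simp [isPath, eq_comm (a := k)]
  · simp only [decide_eq_true_eq]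
    rintro t t' u v u' v' h rfl - rfl -
    simp_all

lemma pathMatrix_eq_one_add_mul_genM : pathMatrix n = 1 + pathMatrix n * genM n := by
  ext k l
  simp only [Matrix.add_apply, Matrix.mul_apply, pathMatrix, Matrix.of_apply, genM_apply_eq_ser,
    one_apply_eq_ser]
  rw [ser_isPath_eq_add, sum_ser_mul_ser]
  · intro w
    rcases List.eq_nil_or_concat' w with rfl | ⟨u, ⟨a, b⟩, rfl⟩
    · simp
    · simp [isPath_append_iff, isPath_singleton, and_comm]
  · simp only [decide_eq_true_eq]
    rintro t t' u v u' v' h - rfl - rfl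
    obtain ⟨rfl, h⟩ := List.append_inj' h rfl
    simp_all

lemma inverse_one_sub_genM : Ring.inverse (1 - genM n) = pathMatrix n := by
  have hleft : (1 - genM n) * pathMatrix n = 1 := by
    rw [sub_mul, one_mul, sub_eq_iff_eq_add, ← pathMatrix_eq_one_add_genM_mul]
  have hright : pathMatrix n * (1 - genM n) = 1 := by
    rw [mul_sub, mul_one, sub_eq_iff_eq_add, ← pathMatrix_eq_one_add_mul_genM]
  exact Ring.inverse_unit ⟨_, _, hleft, hright⟩

lemma ser_isPath_mul_ser_avoidFrom_add (a i : Fin n) :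
    ser (isPath a i) * ser (avoidFrom i i) +
      ser (fun w => !decide (a = i) && avoidFrom i a w) = ser (isPathFrom a) := by
  rw [ser_mul (r := fun w => isPathFrom a w && !(!decide (a = i) && avoidFrom i a w))
    (fun w => ?_) fun _ _ _ _ h hu hv hu' hv' => isPath_append_avoidFrom_unique h hu hv hu' hv']
  · refine ser_add (fun w => ?_) fun w h => by
      rw [Bool.and_eq_true, Bool.not_eq_true'] at h
      exact h.2
    rcases hQ : (!decide (a = i) && avoidFrom i a w)
    · simp
    · simp only [Bool.and_eq_true, Bool.not_eq_true', decide_eq_false_iff_not] at hQ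
      simp [isPathFrom_of_avoidFrom hQ.2]
  · rw [Bool.and_eq_true, Bool.not_eq_true']
    constructor
    · rintro ⟨hw, hQ⟩
      rcases avoidFrom_or_exists_split (i := i) hw with ⟨hai, hav⟩ | h
      · simp [hai, hav] at hQ
      · exact h
    · rintro ⟨u, v, rfl, hu, hv⟩
      refine ⟨isPathFrom_append hu (isPathFrom_of_avoidFrom hv), ?_⟩
      by_cases hai : a = i
      · simp [hai]
      · have hne : u ≠ [] := by rintro rfl; simp [isPath, hai] at hu
        simp [hai, avoidFrom_append_eq_false hu hne]

/-- In `ℚ⟨⟨a_kl⟩⟩` (vertex set `Fin (n+1)`, with `0` playing the role of the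
vertex "1"), for all vertices `i, j`:
`((1 − M)⁻¹)_{1i} · P_i + Q_i = ((1 − M)⁻¹)_{1j} · P_j + Q_j`,
where `P_i` is the series of paths starting at `i` never returning to `i`, and `Q_i` the
series of paths starting at vertex `1` never passing through `i` (so `Q_1 = 0`). -/
theorem stmt11 (n : ℕ) (i j : Fin (n + 1)) :
    Ring.inverse (1 - genM (n + 1)) 0 i * ser (avoidFrom i i) +
        ser (fun w => !decide ((0 : Fin (n + 1)) = i) && avoidFrom i 0 w) =
      Ring.inverse (1 - genM (n + 1)) 0 j * ser (avoidFrom j j) +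
        ser (fun w => !decide ((0 : Fin (n + 1)) = j) && avoidFrom j 0 w) := by
  rw [inverse_one_sub_genM]
  exact (ser_isPath_mul_ser_avoidFrom_add 0 i).trans (ser_isPath_mul_ser_avoidFrom_add 0 j).symm
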